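/- arXiv:1602.00232 — 3 statements merged into one kernel-verified Lean document; each statement's English description precedes it below -/
import Mathlib

section
/- Let h : [t₀, ∞) → [0, ∞) be of class C², γ > 0, and g : [t₀, ∞) → [0, ∞) integrable on [t₀, ∞). If ḧ(t) + γ ḣ(t) ≤ g(t) for all t ≥ t₀, then the positive part (ḣ)₊ of ḣ is integrable on [t₀, ∞), and consequently lim_{t→∞} h(t) exists. -/
open MeasureTheory Filter

/-!
Multiplying by the integrating factor `exp (γ t)` turns `ḧ + γ ḣ ≤ g` into
`ḣ t ≤ exp (-γ (t - t₀)) ḣ t₀ + ∫_{t₀}^t exp (-γ (t - s)) g s ds`. The right-hand side is an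
exponentially decaying term plus the convolution of the integrable function `g` with the
integrable kernel `exp (-γ x) 1_{x ≥ 0}`, so it is integrable, and it dominates `(ḣ)₊`.
Since `h - ∫_{t₀}^t (ḣ)₊` is antitone and bounded below, `h` converges.
-/

open Set Real Convolution Topology

lemma le_exp_mul_add_integral_of_deriv_add_mul_le {u u' g : ℝ → ℝ} {γ a b : ℝ} (hab : a ≤ b)
    (hu : ∀ t ∈ Icc a b, HasDerivAt u (u' t) t) (hg : IntervalIntegrable g volume a b)
    (hle : ∀ t ∈ Ioo a b, u' t + γ * u t ≤ g t) :
    u b ≤ exp (-(γ * (b - a))) * u a + ∫ s in a..b, exp (-(γ * (b - s))) * g s := by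
  have hφ : ∀ t ∈ Icc a b,
      HasDerivAt (fun t => exp (γ * t) * u t) (exp (γ * t) * (u' t + γ * u t)) t := by
    intro t ht
    refine (((hasDerivAt_id' t).const_mul γ).exp.fun_mul (hu t ht)).congr_deriv ?_
    ring
  have hint : IntervalIntegrable (fun s => exp (γ * s) * g s) volume a b :=
    hg.continuousOn_mul (by fun_prop)
  have hφ_le := intervalIntegral.sub_le_integral_of_hasDeriv_right_of_le hab
    (fun t ht => (hφ t ht).continuousAt.continuousWithinAt)
    (fun t ht => (hφ t (Ioo_subset_Icc_self ht)).hasDerivWithinAt)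
    ((intervalIntegrable_iff_integrableOn_Icc_of_le hab).1 hint)
    (fun t ht => mul_le_mul_of_nonneg_left (hle t ht) (exp_pos _).le)
  have hfactor : ∫ s in a..b, exp (-(γ * (b - s))) * g s
      = exp (-(γ * b)) * ∫ s in a..b, exp (γ * s) * g s := by
    rw [← intervalIntegral.integral_const_mul]
    congr 1 with s
    rw [← mul_assoc, ← exp_add]
    ring_nf
  have hinv : exp (-(γ * b)) * exp (γ * b) = 1 := by rw [← exp_add]; simp
  rw [hfactor, show -(γ * (b - a)) = -(γ * b) + γ * a by ring, exp_add]
  calc u b = exp (-(γ * b)) * (exp (γ * b) * u b) := by rw [← mul_assoc, hinv, one_mul]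
    _ ≤ exp (-(γ * b)) * (exp (γ * a) * u a + ∫ s in a..b, exp (γ * s) * g s) :=
        mul_le_mul_of_nonneg_left (by linarith) (exp_pos _).le
    _ = _ := by ring

noncomputable def expDecayKernel (γ : ℝ) : ℝ → ℝ :=
  indicator (Ici 0) fun x => exp (-(γ * x))

lemma expDecayKernel_nonneg (γ x : ℝ) : 0 ≤ expDecayKernel γ x :=
  indicator_nonneg (fun _ _ => (exp_pos _).le) x

lemma integrable_expDecayKernel {γ : ℝ} (hγ : 0 < γ) : Integrable (expDecayKernel γ) := by
  rw [expDecayKernel, integrable_indicator_iff measurableSet_Ici,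
    integrableOn_Ici_iff_integrableOn_Ioi]
  simpa only [neg_mul] using exp_neg_integrableOn_Ioi 0 hγ

lemma indicator_convolution_expDecayKernel (g : ℝ → ℝ) {γ a t : ℝ} (hat : a ≤ t) :
    (indicator (Ici a) g ⋆ expDecayKernel γ) t = ∫ s in a..t, exp (-(γ * (t - s))) * g s := by
  rw [convolution, intervalIntegral.integral_of_le hat, ← integral_Icc_eq_integral_Ioc,
    ← integral_indicator measurableSet_Icc]
  congr 1 with s
  by_cases has : a ≤ s <;> by_cases hst : s ≤ t <;>
    simp [expDecayKernel, has, hst, mul_comm]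

theorem integrableOn_posPart_of_deriv_add_mul_le {u u' g : ℝ → ℝ} {γ a : ℝ} (hγ : 0 < γ)
    (hu : ∀ t, HasDerivAt u (u' t) t) (hg0 : ∀ t ≥ a, 0 ≤ g t) (hgint : IntegrableOn g (Ici a))
    (hle : ∀ t ≥ a, u' t + γ * u t ≤ g t) :
    IntegrableOn (fun t => max (u t) 0) (Ici a) := by
  set w := indicator (Ici a) g ⋆ expDecayKernel γ
  have hw : Integrable w := (hgint.integrable_indicator measurableSet_Ici).integrable_convolution _
    (integrable_expDecayKernel hγ)
  have hw0 : ∀ t, 0 ≤ w t := fun t => integral_nonneg fun s =>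
    mul_nonneg (indicator_nonneg hg0 s) (expDecayKernel_nonneg γ _)
  have hbound : ∀ t ≥ a, max (u t) 0 ≤ |u a| * expDecayKernel γ (t - a) + w t := by
    intro t hat
    have hcmp := le_exp_mul_add_integral_of_deriv_add_mul_le hat (fun s _ => hu s)
      ((intervalIntegrable_iff_integrableOn_Icc_of_le hat).2 (hgint.mono_set Icc_subset_Ici_self))
      (fun s hs => hle s hs.1.le)
    rw [← indicator_convolution_expDecayKernel g hat] at hcmp
    have hkernel : expDecayKernel γ (t - a) = exp (-(γ * (t - a))) :=
      indicator_of_mem (sub_nonneg.2 hat) _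
    refine max_le ?_ (add_nonneg (mul_nonneg (abs_nonneg _) (expDecayKernel_nonneg γ _)) (hw0 t))
    rw [hkernel]
    nlinarith [le_abs_self (u a), exp_pos (-(γ * (t - a)))]
  have hu_cont : Continuous u := continuous_iff_continuousAt.2 fun t => (hu t).continuousAt
  refine Integrable.mono' ((((integrable_expDecayKernel hγ).comp_sub_right a).const_mul |u a|).add
    hw).integrableOn (hu_cont.max continuous_const).aestronglyMeasurable ?_
  filter_upwards [ae_restrict_mem measurableSet_Ici] with t hat
  rw [norm_of_nonneg (le_max_right _ _)]
  exact hbound t hat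

theorem tendsto_of_integrableOn_posPart_deriv {f f' : ℝ → ℝ} {a c : ℝ}
    (hf : ∀ t, HasDerivAt f (f' t) t) (hf' : Continuous f') (hc : ∀ t ≥ a, c ≤ f t)
    (hint : IntegrableOn (fun t => max (f' t) 0) (Ioi a)) :
    ∃ L, Tendsto f atTop (𝓝 L) := by
  set P : ℝ → ℝ := fun T => ∫ t in a..T, max (f' t) 0
  have hP : Tendsto P atTop (𝓝 (∫ t in Ioi a, max (f' t) 0)) :=
    intervalIntegral_tendsto_integral_Ioi a hint tendsto_id
  have hP_le : ∀ T ≥ a, P T ≤ ∫ t in Ioi a, max (f' t) 0 := fun T hT => by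
    show ∫ t in a..T, max (f' t) 0 ≤ _
    rw [intervalIntegral.integral_of_le hT]
    exact setIntegral_mono_set hint (ae_of_all _ fun _ => le_max_right _ _)
      (ae_of_all _ Ioc_subset_Ioi_self)
  have hanti : Antitone (f - P) := antitone_of_hasDerivAt_nonpos
    (fun t => (hf t).sub ((hf'.max continuous_const).integral_hasStrictDerivAt a t).hasDerivAt)
    (fun t => sub_nonpos.2 (le_max_left _ _))
  have hbdd : BddBelow (range (f - P)) := by
    refine ⟨c - ∫ t in Ioi a, max (f' t) 0, ?_⟩
    rintro _ ⟨T, rfl⟩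
    have hT := le_max_right T a
    calc c - ∫ t in Ioi a, max (f' t) 0 ≤ (f - P) (max T a) :=
          sub_le_sub (hc _ hT) (hP_le _ hT)
      _ ≤ (f - P) T := hanti (le_max_left T a)
  exact ⟨_, ((tendsto_atTop_ciInf hanti hbdd).add hP).congr fun T => sub_add_cancel (f T) (P T)⟩

theorem stmt_2_general (t₀ γ : ℝ) (hγ : 0 < γ)
    (h h' h'' : ℝ → ℝ)
    (hnonneg : ∀ t ≥ t₀, 0 ≤ h t)
    (hd1 : ∀ t, HasDerivAt h (h' t) t)
    (hd2 : ∀ t, HasDerivAt h' (h'' t) t)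
    (g : ℝ → ℝ) (hg0 : ∀ t ≥ t₀, 0 ≤ g t)
    (hgint : IntegrableOn g (Set.Ici t₀))
    (hineq : ∀ t ≥ t₀, h'' t + γ * h' t ≤ g t) :
    IntegrableOn (fun t => max (h' t) 0) (Set.Ici t₀) ∧
    ∃ L : ℝ, Tendsto h atTop (nhds L) := by
  have hpos := integrableOn_posPart_of_deriv_add_mul_le hγ hd2 hg0 hgint hineq
  have hh' : Continuous h' := continuous_iff_continuousAt.2 fun t => (hd2 t).continuousAt
  exact ⟨hpos, tendsto_of_integrableOn_posPart_deriv hd1 hh' hnonneg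
    (hpos.mono_set Ioi_subset_Ici_self)⟩

theorem stmt_2 (t₀ γ : ℝ) (hγ : 0 < γ)
    (h h' h'' : ℝ → ℝ)
    (hnonneg : ∀ t ≥ t₀, 0 ≤ h t)
    (hd1 : ∀ t, HasDerivAt h (h' t) t)
    (hd2 : ∀ t, HasDerivAt h' (h'' t) t)
    (hcont : Continuous h'')
    (g : ℝ → ℝ) (hg0 : ∀ t ≥ t₀, 0 ≤ g t)
    (hgint : IntegrableOn g (Set.Ici t₀))
    (hineq : ∀ t ≥ t₀, h'' t + γ * h' t ≤ g t) :
    IntegrableOn (fun t => max (h' t) 0) (Set.Ici t₀) ∧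
    ∃ L : ℝ, Tendsto h atTop (nhds L) :=
  stmt_2_general t₀ γ hγ h h' h'' hnonneg hd1 hd2 g hg0 hgint hineq
end

section
/- Under the same assumptions as in the energy identity for (MIG) (Φ, Ψ convex C¹, Ψ bounded below, Φ bounded below, γ > 0, ε nonincreasing positive C¹ and bounded), every C² solution x of ẍ + γẋ + ∇Φ(x) + ε(t)∇Ψ(x) = 0 on [0,∞) satisfies ∫₀^∞ ‖ẋ(t)‖² dt < ∞ and sup_{t≥0} ‖ẋ(t)‖ < ∞. -/
/-!
With `c` a lower bound of `Ψ`, the shifted energy `E = ½‖ẋ‖² + Φ(x) + ε (Ψ(x) - c)` (the paper's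
`E₁ - c ε`) satisfies `Ė = ε̇ (Ψ(x) - c) - γ‖ẋ‖² ≤ -γ‖ẋ‖²` along solutions, because `ε` is
nonincreasing. So `E(T) + γ ∫₀ᵀ ‖ẋ‖²` is nonincreasing; since `Φ` is bounded below and
`ε (Ψ(x) - c) ≥ 0`, both `½‖ẋ(T)‖²` and `γ ∫₀ᵀ ‖ẋ‖²` are bounded by `E(0) - inf Φ`.
-/

open MeasureTheory Set Filter
open scoped RealInnerProductSpace

lemma AntitoneOn.nonpos_of_hasDerivAt {f : ℝ → ℝ} {f' a t : ℝ} (hf : AntitoneOn f (Ici a))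
    (ht : a ≤ t) (hd : HasDerivAt f f' t) : f' ≤ 0 :=
  hd.hasDerivWithinAt.nonpos_of_antitoneOn
    (by rw [accPt_principal_iff_nhdsWithin, Ici_sdiff_left]; infer_instance)
    (hf.mono (Ici_subset_Ici.2 ht))

lemma integrableOn_Ici_of_intervalIntegral_le {f : ℝ → ℝ} {a C : ℝ} (hf : Continuous f)
    (hf₀ : ∀ t, 0 ≤ f t) (h : ∀ b ≥ a, ∫ t in a..b, f t ≤ C) : IntegrableOn f (Ici a) := by
  rw [integrableOn_Ici_iff_integrableOn_Ioi]
  refine integrableOn_Ioi_of_intervalIntegral_norm_bounded C a (fun _ => hf.integrableOn_Ioc)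
    tendsto_id ?_
  filter_upwards [eventually_ge_atTop a] with b hb
  simpa only [id_eq, Real.norm_of_nonneg (hf₀ _)] using h b hb

section DampedGradientSystem

variable {H : Type*} [NormedAddCommGroup H] [InnerProductSpace ℝ H] [CompleteSpace H]

lemma HasGradientAt.comp_hasDerivAt {f : H → ℝ} {g v : H} {x : ℝ → H} {t : ℝ}
    (hf : HasGradientAt f g (x t)) (hx : HasDerivAt x v t) :
    HasDerivAt (fun s => f (x s)) ⟪g, v⟫ t := by
  have h := hf.hasFDerivAt.comp_hasDerivAt t hx
  simp only [InnerProductSpace.toDual_apply_apply] at h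
  exact h

noncomputable def energy (Φ Ψ : H → ℝ) (ε : ℝ → ℝ) (c : ℝ) (x x' : ℝ → H) (t : ℝ) : ℝ :=
  ‖x' t‖ ^ 2 / 2 + Φ (x t) + ε t * (Ψ (x t) - c)

variable {γ c : ℝ} {Φ Ψ : H → ℝ} {Φ' Ψ' : H → H} {ε ε' : ℝ → ℝ} {x x' x'' : ℝ → H} {t : ℝ}

lemma hasDerivAt_energy (hΦ : HasGradientAt Φ (Φ' (x t)) (x t))
    (hΨ : HasGradientAt Ψ (Ψ' (x t)) (x t)) (hε : HasDerivAt ε (ε' t) t)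
    (hx : HasDerivAt x (x' t) t) (hx' : HasDerivAt x' (x'' t) t)
    (hode : x'' t + γ • x' t + Φ' (x t) + ε t • Ψ' (x t) = 0) :
    HasDerivAt (energy Φ Ψ ε c x x') (ε' t * (Ψ (x t) - c) - γ * ‖x' t‖ ^ 2) t := by
  have hderiv : HasDerivAt (energy Φ Ψ ε c x x')
      (2 * ⟪x' t, x'' t⟫ / 2 + ⟪Φ' (x t), x' t⟫ + (ε' t * (Ψ (x t) - c) + ε t * ⟪Ψ' (x t), x' t⟫))
      t :=
    ((hx'.norm_sq.div_const 2).add (hΦ.comp_hasDerivAt hx)).add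
      (hε.mul ((hΨ.comp_hasDerivAt hx).sub_const c))
  have hacc : x'' t = -(γ • x' t + Φ' (x t) + ε t • Ψ' (x t)) := by
    rw [eq_neg_iff_add_eq_zero, ← hode]; abel
  refine hderiv.congr_deriv ?_
  simp only [hacc, inner_neg_right, inner_add_right, inner_smul_right, real_inner_self_eq_norm_sq,
    real_inner_comm (x' t)]
  ring

lemma antitoneOn_energy_add_integral (hc : ∀ u, c ≤ Ψ u)
    (hΦ : ∀ u, HasGradientAt Φ (Φ' u) u) (hΨ : ∀ u, HasGradientAt Ψ (Ψ' u) u)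
    (hε : ∀ t, HasDerivAt ε (ε' t) t) (hε' : ∀ t > 0, ε' t ≤ 0)
    (hx : ∀ t, HasDerivAt x (x' t) t) (hx' : ∀ t, HasDerivAt x' (x'' t) t)
    (hode : ∀ t ≥ 0, x'' t + γ • x' t + Φ' (x t) + ε t • Ψ' (x t) = 0) :
    AntitoneOn (fun T => energy Φ Ψ ε c x x' T + γ * ∫ t in (0 : ℝ)..T, ‖x' t‖ ^ 2) (Ici 0) := by
  have hcont : Continuous fun t => ‖x' t‖ ^ 2 :=
    (continuous_iff_continuousAt.2 fun t => (hx' t).continuousAt).norm.pow 2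
  have hderiv : ∀ t ≥ 0, HasDerivAt
      (fun T => energy Φ Ψ ε c x x' T + γ * ∫ t in (0 : ℝ)..T, ‖x' t‖ ^ 2)
      (ε' t * (Ψ (x t) - c) - γ * ‖x' t‖ ^ 2 + γ * ‖x' t‖ ^ 2) t := fun t ht =>
    (hasDerivAt_energy (hΦ _) (hΨ _) (hε t) (hx t) (hx' t) (hode t ht)).add
      ((hcont.integral_hasStrictDerivAt 0 t).hasDerivAt.const_mul γ)
  refine antitoneOn_of_deriv_nonpos (convex_Ici 0)
    (fun t ht => (hderiv t ht).continuousAt.continuousWithinAt)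
    (fun t ht => (hderiv t (interior_subset ht)).differentiableAt.differentiableWithinAt)
    fun t ht => ?_
  rw [interior_Ici] at ht
  rw [(hderiv t ht.le).deriv, sub_add_cancel]
  exact mul_nonpos_of_nonpos_of_nonneg (hε' t ht) (sub_nonneg.2 (hc _))

end DampedGradientSystem

theorem stmt_4_general {H : Type*} [NormedAddCommGroup H] [InnerProductSpace ℝ H] [CompleteSpace H]
    (γ : ℝ) (hγ : 0 < γ)
    (Φ Ψ : H → ℝ) (Φ' Ψ' : H → H)
    (hΦ : ∀ u, HasGradientAt Φ (Φ' u) u) (hΨ : ∀ u, HasGradientAt Ψ (Ψ' u) u)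
    (hΦbdd : BddBelow (Set.range Φ)) (hΨbdd : BddBelow (Set.range Ψ))
    (ε ε' : ℝ → ℝ) (hεpos : ∀ t ≥ 0, 0 < ε t) (hεanti : AntitoneOn ε (Set.Ici 0))
    (hεd : ∀ t, HasDerivAt ε (ε' t) t)
    (x x' x'' : ℝ → H)
    (hx : ∀ t, HasDerivAt x (x' t) t) (hx' : ∀ t, HasDerivAt x' (x'' t) t)
    (hode : ∀ t ≥ (0 : ℝ), x'' t + γ • x' t + Φ' (x t) + ε t • Ψ' (x t) = 0) :
    IntegrableOn (fun t => ‖x' t‖ ^ 2) (Set.Ici 0) ∧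
    ∃ M : ℝ, ∀ t ≥ (0 : ℝ), ‖x' t‖ ≤ M := by
  obtain ⟨cΦ, hcΦ⟩ := hΦbdd
  obtain ⟨cΨ, hcΨ⟩ := hΨbdd
  have hε' : ∀ t > 0, ε' t ≤ 0 := fun t ht => hεanti.nonpos_of_hasDerivAt ht.le (hεd t)
  have hdecay := antitoneOn_energy_add_integral (fun u => hcΨ ⟨u, rfl⟩) hΦ hΨ hεd hε' hx hx' hode
  obtain ⟨K, hbound⟩ : ∃ K, ∀ T ≥ 0, ‖x' T‖ ^ 2 / 2 + γ * ∫ t in (0 : ℝ)..T, ‖x' t‖ ^ 2 ≤ K := by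
    refine ⟨energy Φ Ψ ε cΨ x x' 0 - cΦ, fun T hT => ?_⟩
    have hT' := hdecay self_mem_Ici hT hT
    simp only [intervalIntegral.integral_same, mul_zero, add_zero] at hT'
    unfold energy at hT' ⊢
    linarith [hcΦ ⟨x T, rfl⟩, mul_nonneg (hεpos T hT).le (sub_nonneg.2 (hcΨ ⟨x T, rfl⟩))]
  have hint : ∀ T ≥ 0, 0 ≤ ∫ t in (0 : ℝ)..T, ‖x' t‖ ^ 2 := fun T hT =>
    intervalIntegral.integral_nonneg hT fun _ _ => sq_nonneg _
  refine ⟨integrableOn_Ici_of_intervalIntegral_le (C := K / γ)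
    ((continuous_iff_continuousAt.2 fun t => (hx' t).continuousAt).norm.pow 2)
    (fun _ => sq_nonneg _) fun T hT => ?_, √(2 * K), fun t ht => Real.le_sqrt_of_sq_le ?_⟩
  · rw [le_div_iff₀' hγ]
    linarith [hbound T hT, sq_nonneg ‖x' T‖]
  · linarith [hbound t ht, mul_nonneg hγ.le (hint t ht)]

theorem stmt_4 {H : Type*} [NormedAddCommGroup H] [InnerProductSpace ℝ H] [CompleteSpace H]
    (γ : ℝ) (hγ : 0 < γ)
    (Φ Ψ : H → ℝ) (Φ' Ψ' : H → H)
    (hΦconv : ConvexOn ℝ Set.univ Φ) (hΨconv : ConvexOn ℝ Set.univ Ψ)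
    (hΦ : ∀ u, HasGradientAt Φ (Φ' u) u) (hΨ : ∀ u, HasGradientAt Ψ (Ψ' u) u)
    (hΦbdd : BddBelow (Set.range Φ)) (hΨbdd : BddBelow (Set.range Ψ))
    (ε ε' : ℝ → ℝ) (hεpos : ∀ t ≥ 0, 0 < ε t) (hεanti : AntitoneOn ε (Set.Ici 0))
    (hεd : ∀ t, HasDerivAt ε (ε' t) t)
    (x x' x'' : ℝ → H)
    (hx : ∀ t, HasDerivAt x (x' t) t) (hx' : ∀ t, HasDerivAt x' (x'' t) t)
    (hode : ∀ t ≥ (0 : ℝ), x'' t + γ • x' t + Φ' (x t) + ε t • Ψ' (x t) = 0) :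
    IntegrableOn (fun t => ‖x' t‖ ^ 2) (Set.Ici 0) ∧
    ∃ M : ℝ, ∀ t ≥ (0 : ℝ), ‖x' t‖ ≤ M :=
  stmt_4_general γ hγ Φ Ψ Φ' Ψ' hΦ hΨ hΦbdd hΨbdd ε ε' hεpos hεanti hεd x x' x'' hx hx' hode
end

section
/- Let H be a Hilbert space, γ > 0, Φ, Ψ : H → ℝ convex and C¹ with min Φ = 0 and C = argmin Φ nonempty, ε : [0,∞) → (0,∞). Let z ∈ C and p ∈ N_C(z) with −p = ∇Ψ(z). Let x : [0,∞) → H be a C² solution of ẍ + γẋ + ∇Φ(x) + ε(t)∇Ψ(x) = 0, and set h(t) = (1/2)‖x(t) − z‖². Then for all t ≥ 0: ḧ(t) + γ ḣ(t) ≤ [Φ*(ε(t)p) − σ_C(ε(t)p)] + ‖ẋ(t)‖². -/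
open scoped RealInnerProductSpace

/-- Fenchel conjugate (with values in `EReal`). -/
noncomputable def fenchelConj {H : Type*} [NormedAddCommGroup H] [InnerProductSpace ℝ H]
    (Φ : H → ℝ) (y : H) : EReal :=
  ⨆ x : H, ((⟪y, x⟫ - Φ x : ℝ) : EReal)

/-- Support function of a set (with values in `EReal`). -/
noncomputable def suppFn {H : Type*} [NormedAddCommGroup H] [InnerProductSpace ℝ H]
    (C : Set H) (y : H) : EReal :=
  ⨆ x ∈ C, ((⟪y, x⟫ : ℝ) : EReal)

/-! Expanding `ḧ + γḣ = ‖ẋ‖² + ⟪x - z, ẍ + γẋ⟫` and inserting the equation of motion, the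
first-order convexity inequality for `Φ` (with `Φ z = 0`) and the monotonicity of `∇Ψ` (with
`∇Ψ z = -p`) bound `⟪x - z, -∇Φ x - ε ∇Ψ x⟫` by `⟪ε p, x⟫ - Φ x - ⟪ε p, z⟫`. The first two terms
are at most `Φ*(ε p)` by the Fenchel inequality, and the last is `σ_C(ε p)` because `ε p` lies in
the normal cone of `C` at `z`. -/

section Convexity

variable {H : Type*} [NormedAddCommGroup H] [InnerProductSpace ℝ H] [CompleteSpace H]
  {s : Set H} {f : H → ℝ}

theorem ConvexOn.add_inner_gradient_le (hf : ConvexOn ℝ s f) {u v g : H} (hu : u ∈ s)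
    (hv : v ∈ s) (hg : HasGradientAt f g u) :
    f u + ⟪g, v - u⟫ ≤ f v := by
  set L : ℝ →ᵃ[ℝ] H := AffineMap.lineMap u v
  have hline : ConvexOn ℝ (Set.Icc 0 1) (f ∘ L) :=
    (hf.comp_affineMap L).subset (hf.1.mapsTo_lineMap hu hv) (convex_Icc 0 1)
  have hderiv : HasDerivAt (f ∘ L) ⟪g, v - u⟫ 0 := by
    have hg' : HasFDerivAt f (InnerProductSpace.toDual ℝ H g) (L 0) := by
      simpa [L] using hg.hasFDerivAt
    simpa using hg'.comp_hasDerivAt (0 : ℝ) AffineMap.hasDerivAt_lineMap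
  have hslope : slope (f ∘ L) 0 1 = f v - f u := by simp [L, slope_def_field]
  linarith [hline.le_slope_of_hasDerivAt (by simp) (by simp) zero_lt_one hderiv]

theorem ConvexOn.inner_gradient_sub_nonneg (hf : ConvexOn ℝ s f) {u v gu gv : H} (hu : u ∈ s)
    (hv : v ∈ s) (hgu : HasGradientAt f gu u) (hgv : HasGradientAt f gv v) :
    0 ≤ ⟪gu - gv, u - v⟫ := by
  have huv := hf.add_inner_gradient_le hu hv hgu
  have hvu := hf.add_inner_gradient_le hv hu hgv
  rw [← neg_sub u v, inner_neg_right] at huv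
  rw [inner_sub_left]
  linarith

theorem inner_neg_gradient_add_smul_gradient_le {Φ Ψ : H → ℝ} (hΦ : ConvexOn ℝ s Φ)
    (hΨ : ConvexOn ℝ s Ψ) {u z gΦ gΨ p : H} {e : ℝ} (hu : u ∈ s) (hz : z ∈ s)
    (hgΦ : HasGradientAt Φ gΦ u) (hgΨ : HasGradientAt Ψ gΨ u) (hpΨ : HasGradientAt Ψ (-p) z)
    (hΦz : Φ z = 0) (he : 0 ≤ e) :
    ⟪u - z, -(gΦ + e • gΨ)⟫ ≤ ⟪e • p, u⟫ - Φ u - ⟪e • p, z⟫ := by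
  have hΦ_first_order := hΦ.add_inner_gradient_le hu hz hgΦ
  have hΨ_monotone := hΨ.inner_gradient_sub_nonneg hu hz hgΨ hpΨ
  rw [← neg_sub u z, inner_neg_right, real_inner_comm] at hΦ_first_order
  rw [sub_neg_eq_add, inner_add_left, real_inner_comm, inner_sub_right p] at hΨ_monotone
  rw [inner_neg_right, inner_add_right, real_inner_smul_right, real_inner_smul_left,
    real_inner_smul_left]
  nlinarith [mul_nonneg he hΨ_monotone]

end Convexity

section Trajectory

variable {H : Type*} [NormedAddCommGroup H] [InnerProductSpace ℝ H] {x : ℝ → H} {v a : H}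
  {t : ℝ}

theorem HasDerivAt.half_norm_sub_sq (z : H) (hx : HasDerivAt x v t) :
    HasDerivAt (fun t => 1 / 2 * ‖x t - z‖ ^ 2) ⟪x t - z, v⟫ t :=
  (((hx.sub_const z).norm_sq).const_mul (1 / 2 : ℝ)).congr_deriv (by ring)

theorem HasDerivAt.inner_sub_left (z : H) {x' : ℝ → H} (hx : HasDerivAt x (x' t) t)
    (hx' : HasDerivAt x' a t) :
    HasDerivAt (fun t => ⟪x t - z, x' t⟫) (⟪x t - z, a⟫ + ‖x' t‖ ^ 2) t := by
  simpa only [real_inner_self_eq_norm_sq] using (hx.sub_const z).inner ℝ hx'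

end Trajectory

section Conjugates

variable {H : Type*} [NormedAddCommGroup H] [InnerProductSpace ℝ H]

theorem inner_sub_le_fenchelConj (Φ : H → ℝ) (y u : H) :
    ((⟪y, u⟫ - Φ u : ℝ) : EReal) ≤ fenchelConj Φ y :=
  le_iSup (fun u => ((⟪y, u⟫ - Φ u : ℝ) : EReal)) u

theorem suppFn_eq_inner_of_mem {C : Set H} {z q : H} (hz : z ∈ C)
    (hq : ∀ y ∈ C, ⟪q, y - z⟫ ≤ 0) :
    suppFn C q = ⟪q, z⟫ := by
  refine le_antisymm (iSup₂_le fun y hy => ?_)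
    (le_iSup₂ (f := fun y (_ : y ∈ C) => ((⟪q, y⟫ : ℝ) : EReal)) z hz)
  have := hq y hy
  rw [inner_sub_right] at this
  exact EReal.coe_le_coe_iff.mpr (by linarith)

end Conjugates

theorem EReal.coe_le_sub_add_of_le {a r s n : ℝ} {F : EReal} (ha : a ≤ r - s + n)
    (hr : (r : EReal) ≤ F) :
    (a : EReal) ≤ F - s + n :=
  calc (a : EReal) ≤ ((r - s + n : ℝ) : EReal) := EReal.coe_le_coe_iff.mpr ha
    _ = (r : EReal) - s + n := by push_cast; rfl
    _ ≤ F - s + n := add_le_add (EReal.sub_le_sub hr le_rfl) le_rfl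

theorem stmt_10_general {H : Type*} [NormedAddCommGroup H] [InnerProductSpace ℝ H] [CompleteSpace H]
    (γ : ℝ)
    (Φ Ψ : H → ℝ) (Φ' Ψ' : H → H)
    (hΦconv : ConvexOn ℝ Set.univ Φ) (hΨconv : ConvexOn ℝ Set.univ Ψ)
    (hΦ : ∀ u, HasGradientAt Φ (Φ' u) u) (hΨ : ∀ u, HasGradientAt Ψ (Ψ' u) u)
    (C : Set H) (hC : C = {u | Φ u = 0})
    (z : H) (hz : z ∈ C)
    (p : H) (hpN : ∀ y ∈ C, ⟪p, y - z⟫ ≤ 0) (hpΨ : -p = Ψ' z)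
    (ε : ℝ → ℝ) (hεpos : ∀ t ≥ 0, 0 < ε t)
    (x x' x'' : ℝ → H)
    (hx : ∀ t, HasDerivAt x (x' t) t) (hx' : ∀ t, HasDerivAt x' (x'' t) t)
    (hode : ∀ t ≥ (0 : ℝ), x'' t + γ • x' t + Φ' (x t) + ε t • Ψ' (x t) = 0)
    (h h' h'' : ℝ → ℝ)
    (hh : ∀ t, h t = (1 / 2) * ‖x t - z‖ ^ 2)
    (hh' : ∀ t, HasDerivAt h (h' t) t)
    (hh'' : ∀ t, HasDerivAt h' (h'' t) t) :
    ∀ t ≥ (0 : ℝ),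
      ((h'' t + γ * h' t : ℝ) : EReal) ≤
        fenchelConj Φ (ε t • p) - suppFn C (ε t • p) + ((‖x' t‖ ^ 2 : ℝ) : EReal) := by
  intro t ht
  obtain rfl : h = fun t => 1 / 2 * ‖x t - z‖ ^ 2 := funext hh
  obtain rfl : h' = fun t => ⟪x t - z, x' t⟫ :=
    funext fun t => (hh' t).unique ((hx t).half_norm_sub_sq z)
  have h''_eq : h'' t = ⟪x t - z, x'' t⟫ + ‖x' t‖ ^ 2 :=
    (hh'' t).unique ((hx t).inner_sub_left z (hx' t))
  have hmotion : x'' t + γ • x' t = -(Φ' (x t) + ε t • Ψ' (x t)) :=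
    eq_neg_of_add_eq_zero_left (by rw [← add_assoc]; exact hode t ht)
  have hnormal : ∀ y ∈ C, ⟪ε t • p, y - z⟫ ≤ 0 := fun y hy => by
    rw [real_inner_smul_left]
    exact mul_nonpos_of_nonneg_of_nonpos (hεpos t ht).le (hpN y hy)
  have hest := inner_neg_gradient_add_smul_gradient_le hΦconv hΨconv (Set.mem_univ (x t))
    (Set.mem_univ z) (hΦ (x t)) (hΨ (x t)) (hpΨ ▸ hΨ z) (by subst hC; exact hz) (hεpos t ht).le
  rw [suppFn_eq_inner_of_mem hz hnormal]
  refine EReal.coe_le_sub_add_of_le ?_ (inner_sub_le_fenchelConj Φ _ (x t))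
  calc h'' t + γ * ⟪x t - z, x' t⟫ = ⟪x t - z, x'' t + γ • x' t⟫ + ‖x' t‖ ^ 2 := by
        rw [h''_eq, inner_add_right, real_inner_smul_right]; ring
    _ ≤ _ := by rw [hmotion]; linarith

theorem stmt_10 {H : Type*} [NormedAddCommGroup H] [InnerProductSpace ℝ H] [CompleteSpace H]
    (γ : ℝ) (hγ : 0 < γ)
    (Φ Ψ : H → ℝ) (Φ' Ψ' : H → H)
    (hΦconv : ConvexOn ℝ Set.univ Φ) (hΨconv : ConvexOn ℝ Set.univ Ψ)
    (hΦ : ∀ u, HasGradientAt Φ (Φ' u) u) (hΨ : ∀ u, HasGradientAt Ψ (Ψ' u) u)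
    (hΦnonneg : ∀ u, 0 ≤ Φ u)
    (C : Set H) (hC : C = {u | Φ u = 0})
    (z : H) (hz : z ∈ C)
    (p : H) (hpN : ∀ y ∈ C, ⟪p, y - z⟫ ≤ 0) (hpΨ : -p = Ψ' z)
    (ε : ℝ → ℝ) (hεpos : ∀ t ≥ 0, 0 < ε t)
    (x x' x'' : ℝ → H)
    (hx : ∀ t, HasDerivAt x (x' t) t) (hx' : ∀ t, HasDerivAt x' (x'' t) t)
    (hode : ∀ t ≥ (0 : ℝ), x'' t + γ • x' t + Φ' (x t) + ε t • Ψ' (x t) = 0)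
    (h h' h'' : ℝ → ℝ)
    (hh : ∀ t, h t = (1 / 2) * ‖x t - z‖ ^ 2)
    (hh' : ∀ t, HasDerivAt h (h' t) t)
    (hh'' : ∀ t, HasDerivAt h' (h'' t) t) :
    ∀ t ≥ (0 : ℝ),
      ((h'' t + γ * h' t : ℝ) : EReal) ≤
        fenchelConj Φ (ε t • p) - suppFn C (ε t • p) + ((‖x' t‖ ^ 2 : ℝ) : EReal) :=
  stmt_10_general γ Φ Ψ Φ' Ψ' hΦconv hΨconv hΦ hΨ C hC z hz p hpN hpΨ ε hεpos x x' x'' hx hx' hode h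
    h' h'' hh hh' hh''
end
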